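/- arXiv:2112.05281 — 2 statements merged into one kernel-verified Lean document; each statement's English description precedes it below -/
import Mathlib

section
/- For every integer k ≥ 2, the formal power series identity Σ_{n=0}^∞ (C_k(kn,0)·k^n/(kn)!)·x^n = exp(-x)/(1 - kx) holds in ℚ[[x]]; that is, for every n ≥ 0, C_k(kn,0)·k^n/(kn)! = Σ_{i=0}^{n} (-1)^i·k^{n-i}/i!. -/
/-- `C k n m` is the number of permutations of `n` letters whose cycle
decomposition contains exactly `m` cycles of length `k`. -/
noncomputable def C (k n m : ℕ) : ℕ :=
  Nat.card {π : Equiv.Perm (Fin n) // π.cycleType.count k = m}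

/-!
Removing a marked `k`-cycle from a permutation of `N + k` letters with `m + 1` cycles of
length `k` leaves a permutation of the other `N` letters with `m` of them. Since there are
`(N + k)! / (N! k)` cycles of length `k`, double counting the marked pairs gives
`(m + 1) k N! C_k(N + k, m + 1) = (N + k)! C_k(N, m)`, and iterating,
`C_k(kn, i) / (kn)! = C_k(k(n - i), 0) / ((k(n - i))! i! kⁱ)`.
A permutation of `kn` letters has at most `n` cycles of length `k`, so summing over `i` gives
`exp x · ∑ C_k(kn, 0) kⁿ / (kn)! xⁿ = ∑ kⁿ xⁿ`; multiplying by `exp (-x)` gives the claim.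
-/

open Equiv Finset
open PowerSeries hiding C
open scoped Nat

namespace Equiv.Perm

theorem Disjoint.apply_mem_fixedPoints_iff {α : Type*} {τ c : Perm α} (h : Disjoint τ c)
    (x : α) : τ x ∈ Function.fixedPoints c ↔ x ∈ Function.fixedPoints c :=
  apply_mem_fixedPoints_iff_mem_of_mem_centralizer
    (Subgroup.mem_centralizer_singleton_iff.mpr h.commute.eq)

variable {α β : Type*} [Fintype α] [DecidableEq α] [Fintype β] [DecidableEq β]

theorem cycleType_permCongr (e : α ≃ β) (π : Perm α) :
    (e.permCongr π).cycleType = π.cycleType := by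
  let f : α ≃ {b : β // True} := e.trans (subtypeUnivEquiv fun _ => trivial).symm
  have h : e.permCongr π = π.extendDomain f := by
    ext b
    rw [extendDomain_apply_subtype _ _ trivial]
    simp [f, permCongr_apply, subtypeUnivEquiv]
  rw [h, cycleType_extendDomain]

theorem card_count_cycleType_congr (e : α ≃ β) (k m : ℕ) :
    #{π : Perm α | π.cycleType.count k = m} = #{π : Perm β | π.cycleType.count k = m} :=
  card_equiv e.permCongr fun π => by simp [cycleType_permCongr]

theorem card_cycleType_singleton_mul {k n : ℕ} (hk : 2 ≤ k) (hα : Fintype.card α = n + k) :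
    #{c : Perm α | c.cycleType = {k}} * (n ! * k) = (n + k)! := by
  simpa [hk, hα] using card_of_cycleType_mul_eq (α := α) {k}

theorem count_cycleType_eq_card_filter (π : Perm α) (k : ℕ) :
    π.cycleType.count k = #{c ∈ π.cycleFactorsFinset | c.cycleType = {k}} := by
  rw [cycleType_def, Multiset.count_map, Finset.card, Finset.filter_val]
  congr 1
  refine Multiset.filter_congr fun c hc => ?_
  rw [(mem_cycleFactorsFinset_iff.mp hc).1.cycleType, Multiset.singleton_inj, eq_comm]
  rfl

def cycleFactorEquiv {c : Perm α} (hc : c.IsCycle) :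
    {π : Perm α // c ∈ π.cycleFactorsFinset} ≃ Perm (Function.fixedPoints c) where
  toFun π := (π.1 * c⁻¹).subtypePerm
    (disjoint_mul_inv_of_mem_cycleFactorsFinset π.2).apply_mem_fixedPoints_iff
  invFun σ := ⟨ofSubtype σ * c, by
    rw [(disjoint_ofSubtype_of_memFixedPoints_self σ).cycleFactorsFinset_mul_eq_union,
      hc.cycleFactorsFinset_eq_singleton]
    exact mem_union_right _ (mem_singleton_self c)⟩
  left_inv π := by
    ext1
    have hd := disjoint_mul_inv_of_mem_cycleFactorsFinset π.2
    exact (congrArg (· * c) (ofSubtype_subtypePerm hd.apply_mem_fixedPoints_iff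
      fun x hx => (hd x).resolve_left hx)).trans (inv_mul_cancel_right _ _)
  right_inv σ := by
    ext x
    simp

theorem cycleType_cycleFactorEquiv_symm {c : Perm α} (hc : c.IsCycle)
    (σ : Perm (Function.fixedPoints c)) :
    ((cycleFactorEquiv hc).symm σ : Perm α).cycleType = σ.cycleType + c.cycleType := by
  rw [cycleFactorEquiv, coe_fn_symm_mk,
    (disjoint_ofSubtype_of_memFixedPoints_self σ).cycleType_mul, cycleType_ofSubtype]

theorem card_filter_mem_cycleFactorsFinset {k n : ℕ} (hα : Fintype.card α = n + k) {c : Perm α}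
    (hc : c.cycleType = {k}) (m : ℕ) :
    #{π : Perm α | c ∈ π.cycleFactorsFinset ∧ π.cycleType.count k = m + 1} =
      #{σ : Perm (Fin n) | σ.cycleType.count k = m} := by
  have hcyc : c.IsCycle := card_cycleType_eq_one.mp (by simp [hc])
  have hF : Fintype.card (Function.fixedPoints c) = n := by
    rw [card_fixedPoints, hc, Multiset.sum_singleton, hα, Nat.add_sub_cancel]
  rw [← card_count_cycleType_congr (Fintype.equivFinOfCardEq hF), ← Fintype.card_subtype,
    ← Fintype.card_subtype]
  refine Fintype.card_congr ((subtypeSubtypeEquivSubtypeInter _ _).symm.trans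
    ((cycleFactorEquiv hcyc).symm.subtypeEquiv fun σ => ?_).symm)
  simp [cycleType_cycleFactorEquiv_symm, hc]

theorem card_count_cycleType_succ_mul {k n : ℕ} (hα : Fintype.card α = n + k) (m : ℕ) :
    #{π : Perm α | π.cycleType.count k = m + 1} * (m + 1) =
      #{c : Perm α | c.cycleType = {k}} * #{σ : Perm (Fin n) | σ.cycleType.count k = m} := by
  refine card_mul_eq_card_mul (fun π c => c ∈ π.cycleFactorsFinset) (fun π hπ => ?_)
    (fun c hc => ?_)
  · rw [mem_filter] at hπ
    rw [← hπ.2, count_cycleType_eq_card_filter, bipartiteAbove, filter_filter]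
    congr 1
    ext c
    simp [and_comm]
  · rw [mem_filter] at hc
    rw [← card_filter_mem_cycleFactorsFinset hα hc.2, bipartiteBelow, filter_filter]
    congr 1
    ext π
    simp [and_comm]

theorem card_count_cycleType_succ_mul_factorial {k n : ℕ} (hk : 2 ≤ k)
    (hα : Fintype.card α = n + k) (m : ℕ) :
    #{π : Perm α | π.cycleType.count k = m + 1} * (m + 1) * (n ! * k) =
      (n + k)! * #{σ : Perm (Fin n) | σ.cycleType.count k = m} := by
  rw [card_count_cycleType_succ_mul hα, mul_right_comm, card_cycleType_singleton_mul hk hα]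

theorem count_cycleType_mul_le (π : Perm α) (k : ℕ) :
    π.cycleType.count k * k ≤ Fintype.card α := by
  calc π.cycleType.count k * k = (Multiset.replicate (π.cycleType.count k) k).sum := by simp
    _ ≤ π.cycleType.sum := by
      obtain ⟨s, hs⟩ := Multiset.le_iff_exists_add.mp
        (Multiset.le_count_iff_replicate_le.mp (le_refl (π.cycleType.count k)))
      exact (Nat.le_add_right _ s.sum).trans_eq (by rw [← Multiset.sum_add, ← hs])
    _ ≤ Fintype.card α := sum_cycleType_le π

theorem sum_card_count_cycleType {k n : ℕ} (hk : 1 ≤ k) (hα : Fintype.card α ≤ k * n) :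
    ∑ m ∈ range (n + 1), #{π : Perm α | π.cycleType.count k = m} = (Fintype.card α)! := by
  rw [← card_eq_sum_card_fiberwise fun π _ => ?_, card_univ, Fintype.card_perm]
  have := count_cycleType_mul_le π k
  simp only [coe_range, Set.mem_Iio]
  nlinarith

end Equiv.Perm

theorem PowerSeries.eq_evalNegHom_exp_mul_of_exp_mul_eq {A : Type*} [CommRing A] [Algebra ℚ A]
    {f g : A⟦X⟧} (h : exp A * f = g) : f = evalNegHom (exp A) * g := by
  rw [← h, ← mul_assoc, mul_comm (evalNegHom _), exp_mul_exp_neg_eq_one, one_mul]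

theorem C_eq_card (k n m : ℕ) : C k n m = #{π : Perm (Fin n) | π.cycleType.count k = m} := by
  rw [C, Nat.card_eq_fintype_card, Fintype.card_subtype]

theorem C_succ_mul_factorial {k : ℕ} (hk : 2 ≤ k) (n m : ℕ) :
    C k (k * (n + 1)) (m + 1) * (m + 1) * ((k * n)! * k) = (k * (n + 1))! * C k (k * n) m := by
  have hα : Fintype.card (Fin (k * (n + 1))) = k * n + k := by rw [Fintype.card_fin, Nat.mul_succ]
  simpa only [C_eq_card, ← Nat.mul_succ] using
    Perm.card_count_cycleType_succ_mul_factorial hk hα m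

theorem C_mul_factorial_mul_pow_mul_factorial {k : ℕ} (hk : 2 ≤ k) (i j : ℕ) :
    C k (k * (i + j)) i * i ! * k ^ i * (k * j)! = (k * (i + j))! * C k (k * j) 0 := by
  induction i with
  | zero => simp [mul_comm]
  | succ i ih =>
    refine Nat.eq_of_mul_eq_mul_right (Nat.factorial_pos (k * (i + j))) ?_
    rw [add_right_comm]
    calc _ = C k (k * (i + j + 1)) (i + 1) * (i + 1) * ((k * (i + j))! * k) *
          (i ! * k ^ i * (k * j)!) := by
          rw [Nat.factorial_succ, pow_succ]; ring
      _ = (k * (i + j + 1))! * (C k (k * (i + j)) i * i ! * k ^ i * (k * j)!) := by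
          rw [C_succ_mul_factorial hk]; ring
      _ = _ := by rw [ih]; ring

theorem sum_range_C {k : ℕ} (hk : 1 ≤ k) (n : ℕ) :
    ∑ i ∈ range (n + 1), C k (k * n) i = (k * n)! := by
  simpa only [C_eq_card, Fintype.card_fin] using
    Perm.sum_card_count_cycleType (α := Fin (k * n)) hk (Fintype.card_fin _).le

noncomputable def kCycleFreeSeries (k : ℕ) : ℚ⟦X⟧ :=
  mk fun n => C k (k * n) 0 * k ^ n / (k * n)!

theorem exp_mul_kCycleFreeSeries {k : ℕ} (hk : 2 ≤ k) :
    exp ℚ * kCycleFreeSeries k = mk fun n => (k : ℚ) ^ n := by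
  ext n
  rw [coeff_mul, coeff_mk, Nat.sum_antidiagonal_eq_sum_range_succ_mk]
  have hsum : ((k * n)! : ℚ) = ∑ i ∈ range (n + 1), (C k (k * n) i : ℚ) := by
    exact_mod_cast (sum_range_C (by omega) n).symm
  calc _ = ∑ i ∈ range (n + 1), (k : ℚ) ^ n * C k (k * n) i / (k * n)! := by
        refine sum_congr rfl fun i hi => ?_
        obtain ⟨j, rfl⟩ : ∃ j, n = i + j := ⟨n - i, by rw [mem_range] at hi; omega⟩
        have h : (C k (k * (i + j)) i : ℚ) * i ! * (k : ℚ) ^ i * (k * j)! =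
            (k * (i + j))! * C k (k * j) 0 := by
          exact_mod_cast C_mul_factorial_mul_pow_mul_factorial hk i j
        simp only [coeff_exp, kCycleFreeSeries, coeff_mk, Algebra.algebraMap_self,
          RingHom.id_apply, add_tsub_cancel_left]
        field_simp
        rw [pow_add]
        linear_combination (-(k : ℚ) ^ j) * h
    _ = _ := by rw [← sum_div, ← mul_sum, ← hsum, mul_div_cancel_right₀ _ (by positivity)]

theorem stmt9 (k : ℕ) (hk : 2 ≤ k) (n : ℕ) :
    (C k (k * n) 0 : ℚ) * k ^ n / (k * n).factorial =
      ∑ i ∈ Finset.range (n + 1), (-1 : ℚ) ^ i * k ^ (n - i) / i.factorial := by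
  have h := congrArg (coeff n)
    (eq_evalNegHom_exp_mul_of_exp_mul_eq (exp_mul_kCycleFreeSeries hk))
  rw [coeff_mul, Nat.sum_antidiagonal_eq_sum_range_succ
    (fun i j => coeff i (evalNegHom (exp ℚ)) * coeff j (mk fun n => (k : ℚ) ^ n))] at h
  simpa [kCycleFreeSeries, evalNegHom, coeff_rescale, div_eq_mul_inv, mul_comm, mul_left_comm]
    using h
end

section
/- For all integers k > 1 and n ≥ 0, the formal power series identity Σ_{n=0}^∞ (D(k,n)/n!)·x^n = exp(-x)/(1 - kx) holds in ℚ[[x]]. -/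
/-!
Inclusion–exclusion over the set of indices `i` with `π i = i` and `xᵢ = 0`: the elements
fixing a given `j`-set pointwise form a copy of `S(k, n - j)`, of order `k^(n-j) (n-j)!`, so
`D(k,n)/n! = ∑_j (-1)^j / j! · k^(n-j)`, which is the Cauchy product of the coefficients of
`exp(-x)` and of the geometric series `1/(1 - kx)`.
-/

/-- `D k n` is the number of derangements (fixed-point-free elements) of the
generalized symmetric group `S(k, n) = (ℤ/kℤ) ≀ Sₙ`: pairs `((x₁,…,xₙ), π)`
such that for every `i`, either `π i ≠ i` or `xᵢ ≠ 0`. -/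
noncomputable def D (k n : ℕ) : ℕ :=
  Nat.card {p : (Fin n → ZMod k) × Equiv.Perm (Fin n) // ∀ i, p.2 i ≠ i ∨ p.1 i ≠ 0}

open Finset PowerSeries

theorem Finset.mem_inf_iff_forall {ι α : Type*} [Fintype α] [DecidableEq α] {t : Finset ι}
    {S : ι → Finset α} {a : α} : a ∈ t.inf S ↔ ∀ i ∈ t, a ∈ S i := by
  classical
  induction t using Finset.induction_on with
  | empty => simp
  | insert i t _ ih => simp [ih]

section
variable {ι : Type*} [Fintype ι] [DecidableEq ι] (s : Finset ι)

theorem card_filter_forall_mem_eq_zero (G : Type*) [Fintype G] [Zero G] [DecidableEq G] :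
    #{x : ι → G | ∀ i ∈ s, x i = 0} = Fintype.card G ^ (Fintype.card ι - #s) := by
  have hpi : ({x : ι → G | ∀ i ∈ s, x i = 0} : Finset _) =
      Fintype.piFinset fun i => if i ∈ s then {0} else univ := by
    ext x
    simp only [mem_filter, mem_univ, true_and, Fintype.mem_piFinset]
    refine forall_congr' fun i => ?_
    split_ifs <;> simp [*]
  rw [hpi, Fintype.card_piFinset, ← prod_mul_prod_compl s,
    prod_eq_one fun i hi => by rw [if_pos hi, card_singleton], one_mul, ← card_compl,
    ← card_univ, ← prod_const]
  exact prod_congr rfl fun i hi => by rw [if_neg (mem_compl.1 hi)]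

theorem card_perm_filter_forall_mem_fixed :
    #{σ : Equiv.Perm ι | ∀ i ∈ s, σ i = i} = (Fintype.card ι - #s).factorial := by
  rw [← Fintype.card_subtype, ← card_compl, ← Fintype.card_coe sᶜ, ← Fintype.card_perm]
  refine Fintype.card_congr ((Equiv.subtypeEquivRight fun σ => ?_).trans
    (Equiv.Perm.subtypeEquivSubtypePerm (· ∈ sᶜ)).symm)
  simp

theorem card_filter_forall_mem_fixed_pair (G : Type*) [Fintype G] [Zero G] [DecidableEq G] :
    #{p : (ι → G) × Equiv.Perm ι | ∀ i ∈ s, p.2 i = i ∧ p.1 i = 0} =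
      Fintype.card G ^ (Fintype.card ι - #s) * (Fintype.card ι - #s).factorial := by
  rw [← card_filter_forall_mem_eq_zero, ← card_perm_filter_forall_mem_fixed, ← card_product]
  congr 1
  ext p
  simp [forall_and, and_comm]

end

theorem PowerSeries.inv_one_sub_C_mul_X {K : Type*} [Field K] (a : K) :
    (1 - C a * X)⁻¹ = mk fun n => a ^ n := by
  rw [inv_eq_iff_mul_eq_one (by simp)]
  simpa [rescale_mk, rescale_X] using congrArg (rescale a) (mk_one_mul_one_sub_eq_one K)

theorem D_eq_sum (k n : ℕ) [NeZero k] :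
    (D k n : ℤ) = ∑ j ∈ range (n + 1),
      n.choose j * ((-1) ^ j * (k ^ (n - j) * (n - j).factorial : ℤ)) := by
  classical
  let S : Fin n → Finset ((Fin n → ZMod k) × Equiv.Perm (Fin n)) :=
    fun i => {p | p.2 i = i ∧ p.1 i = 0}
  have hD : D k n = #(univ.inf fun i => (S i)ᶜ) := by
    rw [D, Nat.card_eq_fintype_card, Fintype.card_subtype]
    congr 1
    ext p
    simp [mem_inf_iff_forall, S, or_iff_not_imp_left]
  have hS (t : Finset (Fin n)) : #(t.inf S) = k ^ (n - #t) * (n - #t).factorial := by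
    have hcard := card_filter_forall_mem_fixed_pair t (ZMod k)
    rw [ZMod.card, Fintype.card_fin] at hcard
    rw [← hcard]
    congr 1
    ext p
    simp [mem_inf_iff_forall, S]
  rw [hD, inclusion_exclusion_card_inf_compl]
  simp_rw [hS]
  push_cast
  rw [sum_powerset_apply_card (fun j => (-1 : ℤ) ^ j * (k ^ (n - j) * (n - j).factorial)),
    card_univ, Fintype.card_fin]
  simp only [nsmul_eq_mul]

theorem D_div_factorial (k n : ℕ) [NeZero k] :
    (D k n : ℚ) / n.factorial =
      ∑ j ∈ range (n + 1), (-1 : ℚ) ^ j / j.factorial * (k : ℚ) ^ (n - j) := by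
  have hD : (D k n : ℚ) = ∑ j ∈ range (n + 1),
      (n.choose j : ℚ) * ((-1) ^ j * (k ^ (n - j) * (n - j).factorial)) := by
    exact_mod_cast D_eq_sum k n
  rw [hD, sum_div]
  refine sum_congr rfl fun j hj => ?_
  rw [Nat.cast_choose ℚ (Nat.lt_succ_iff.1 (mem_range.1 hj))]
  field_simp

theorem stmt11 (k : ℕ) (hk : 1 < k) :
    (PowerSeries.mk fun n => (D k n : ℚ) / n.factorial) =
      PowerSeries.rescale (-1) (PowerSeries.exp ℚ) *
        (1 - PowerSeries.C (k : ℚ) * PowerSeries.X)⁻¹ := by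
  have : NeZero k := ⟨by omega⟩
  ext n
  rw [inv_one_sub_C_mul_X, coeff_mk, D_div_factorial, coeff_mul,
    Nat.sum_antidiagonal_eq_sum_range_succ_mk]
  simp [coeff_rescale, coeff_exp, div_eq_mul_inv]
end
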